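/- arXiv:math/9806074 — 11 statements merged into one kernel-verified Lean document; each statement's English description precedes it below -/
import Mathlib

section
/- Let k be a field and let (b_ij), 1 ≤ i,j ≤ θ, be a symmetric braiding matrix of Cartan type all of whose entries are roots of unity of odd order, with associated Cartan integers (a_ij). If (b_ij) is connected, symmetrizable, and satisfies the relative primeness condition (for all i ≠ j, a_ij is 0 or relatively prime to the order of b_ii), then (b_ij) is of FL-type: there exist positive integers d_1, …, d_θ with d_i·a_ij = d_j·a_ji for all i,j and an element q ∈ kˣ such that b_ij = q^{d_i·a_ij} for all i,j. -/
private lemma chain_rel' {θ : ℕ} {a : Fin θ → Fin θ → ℤ}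
    (R : Fin θ → Fin θ → Prop) (hrefl : ∀ i, R i i)
    (htrans : ∀ i j l, R i j → R j l → R i l)
    (hstep : ∀ i j, a i j ≠ 0 → R i j)
    (hconn : ∀ i j, i ≠ j → ∃ P : ℕ, ∃ h : Fin (P + 1) → Fin θ,
      h 0 = i ∧ h (Fin.last P) = j ∧ ∀ l : Fin P, a (h l.castSucc) (h l.succ) ≠ 0) :
    ∀ i j, R i j := by
  intro i j
  rcases eq_or_ne i j with rfl | hij
  · exact hrefl i
  obtain ⟨P, h, h0, hlast, hedge⟩ := hconn i j hij
  have key : ∀ l : Fin (P + 1), R (h 0) (h l) := by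
    intro l
    induction l using Fin.induction with
    | zero => exact hrefl _
    | succ m ih => exact htrans _ _ _ ih (hstep _ _ (hedge m))
  rw [← h0, ← hlast]; exact key _



/-- A symmetric, connected, symmetrizable braiding matrix of Cartan type with
entries roots of unity of odd order satisfying the relative primeness condition is of FL-type. -/
theorem braiding_of_cartan_type_relatively_prime_is_FL_type
    {k : Type*} [Field k] {θ : ℕ}
    (b : Fin θ → Fin θ → kˣ) (a : Fin θ → Fin θ → ℤ)
    -- entries are roots of unity of odd order
    (hodd : ∀ i j, Odd (orderOf (b i j)))
    -- Cartan type
    (hbii : ∀ i, b i i ≠ 1)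
    (haii : ∀ i, a i i = 2)
    (haij : ∀ i j, i ≠ j → -(orderOf (b i i) : ℤ) < a i j ∧ a i j ≤ 0)
    (hcartan : ∀ i j, b i j * b j i = b i i ^ (a i j))
    -- symmetric
    (hsym : ∀ i j, b i j = b j i)
    -- connected
    (hconn : ∀ i j, i ≠ j → ∃ P : ℕ, ∃ h : Fin (P + 1) → Fin θ,
      h 0 = i ∧ h (Fin.last P) = j ∧ ∀ l : Fin P, a (h l.castSucc) (h l.succ) ≠ 0)
    -- symmetrizable
    (hsymmetrizable : ∃ d : Fin θ → ℤ, (∀ i, 0 < d i) ∧ ∀ i j, d i * a i j = d j * a j i)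
    -- relative primeness condition
    (hprime : ∀ i j, i ≠ j → a i j = 0 ∨ Int.gcd (a i j) (orderOf (b i i) : ℤ) = 1) :
    -- conclusion: FL-type
    ∃ d : Fin θ → ℤ, (∀ i, 0 < d i) ∧ (∀ i j, d i * a i j = d j * a j i) ∧
      ∃ q : kˣ, ∀ i j, b i j = q ^ (d i * a i j) := by
  rcases Nat.eq_zero_or_pos θ with rfl | hθ
  · exact ⟨fun _ => 1, fun i => i.elim0, fun i => i.elim0, 1, fun i => i.elim0⟩
  obtain ⟨d, hdpos, hdsym⟩ := hsymmetrizable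
  have i0 : Fin θ := ⟨0, hθ⟩
  -- basic order facts
  have hN0 : ∀ i j, orderOf (b i j) ≠ 0 := by
    intro i j h
    simpa [h, Nat.odd_iff] using hodd i j
  -- squares
  have hsq : ∀ i j, b i j ^ (2 : ℕ) = b i i ^ (a i j) := by
    intro i j
    rw [pow_two]
    nth_rewrite 2 [hsym i j]
    exact hcartan i j
  -- order of off-diagonal divides order of diagonal
  have horddvd : ∀ i j, orderOf (b i j) ∣ orderOf (b i i) := by
    intro i j
    have h1 : b i j ^ (orderOf (b i i) * 2) = 1 := by
      rw [mul_comm, pow_mul, hsq i j, ← zpow_natCast (b i i ^ (a i j)),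
        ← zpow_mul, mul_comm, zpow_mul, zpow_natCast, pow_orderOf_eq_one, one_zpow]
    have h2 : orderOf (b i j) ∣ orderOf (b i i) * 2 := orderOf_dvd_of_pow_eq_one h1
    exact (Nat.Coprime.dvd_of_dvd_mul_right ((hodd i j).coprime_two_right) h2)
  -- nonzero a i j implies a j i nonzero
  have hanz : ∀ i j, a i j ≠ 0 → a j i ≠ 0 := by
    intro i j hij hji
    have h := hdsym i j
    rw [hji, mul_zero] at h
    rcases mul_eq_zero.mp h with h' | h'
    · exact (hdpos i).ne' h'
    · exact hij h'
  -- coprimality of a i j with order, as Nat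
  have hcop : ∀ i j, i ≠ j → a i j ≠ 0 →
      Nat.Coprime (a i j).natAbs (orderOf (b i i)) := by
    intro i j hij hnz
    rcases hprime i j hij with h | h
    · exact absurd h hnz
    · rwa [Int.gcd, Int.natAbs_natCast] at h
  have hzpow : ∀ i j, i ≠ j → b i i ^ (a i j) = (b i i ^ (a i j).natAbs)⁻¹ := by
    intro i j hij
    have h2 : a i j ≤ 0 := (haij i j hij).2
    rw [← zpow_natCast, Int.ofNat_natAbs_of_nonpos h2, zpow_neg, inv_inv]
  -- all diagonal orders are equal
  have hordstep : ∀ i j, a i j ≠ 0 → orderOf (b i i) = orderOf (b j j) := by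
    intro i j hnz
    rcases eq_or_ne i j with rfl | hij
    · rfl
    have hji : j ≠ i := hij.symm
    have hnz' : a j i ≠ 0 := hanz i j hnz
    have e1 : orderOf (b i i ^ (a i j)) = orderOf (b i i) := by
      rw [hzpow i j hij, orderOf_inv]
      exact Nat.Coprime.orderOf_pow ((hcop i j hij hnz).symm)
    have e2 : orderOf (b j j ^ (a j i)) = orderOf (b j j) := by
      rw [hzpow j i hji, orderOf_inv]
      exact Nat.Coprime.orderOf_pow ((hcop j i hji hnz').symm)
    have e3 : b i i ^ (a i j) = b j j ^ (a j i) := by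
      rw [← hcartan i j, ← hcartan j i, mul_comm]
    rw [← e1, e3, e2]
  have hordeq : ∀ i j, orderOf (b i i) = orderOf (b j j) :=
    chain_rel' _ (fun _ => rfl) (fun _ _ _ h1 h2 => h1.trans h2) hordstep hconn
  set N := orderOf (b i0 i0) with hN
  have hNodd : Odd N := hodd i0 i0
  haveI : NeZero N := ⟨hN0 i0 i0⟩
  set g : kˣ := b i0 i0 with hg
  have hog : orderOf g = N := hN.symm
  have hNdiag : ∀ i, orderOf (b i i) = N := fun i => (hordeq i i0).trans hog
  have hprim : IsPrimitiveRoot g N := hog ▸ IsPrimitiveRoot.orderOf g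
  have hmem : ∀ i j, ∃ m : ℤ, g ^ m = b i j := by
    intro i j
    have h1 : b i j ^ N = 1 :=
      orderOf_dvd_iff_pow_eq_one.mp ((horddvd i j).trans (hNdiag i).dvd)
    have h2 : b i j ∈ rootsOfUnity N k := (mem_rootsOfUnity N _).mpr h1
    rw [← hprim.zpowers_eq] at h2
    exact Subgroup.mem_zpowers_iff.mp h2
  choose s hs using hmem
  -- congruence machinery
  have hmod : ∀ x y : ℤ, g ^ x = g ^ y ↔ ((x : ZMod N) = (y : ZMod N)) := by
    intro x y
    rw [zpow_eq_zpow_iff_modEq, hog, ZMod.intCast_eq_intCast_iff]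
  have hcong : ∀ i j,
      (2 : ZMod N) * ((s i j : ℤ) : ZMod N) = ((s i i : ℤ) : ZMod N) * ((a i j : ℤ) : ZMod N) := by
    intro i j
    have h1 : g ^ (s i j * 2) = g ^ (s i i * a i j) := by
      have h2 : s i j * 2 = s i j + s i j := by ring
      rw [h2, zpow_add, hs i j, zpow_mul, hs i i, ← pow_two, hsq i j]
    have h3 := (hmod _ _).mp h1
    push_cast at h3 ⊢
    rw [mul_comm]
    exact h3
  have hSsym : ∀ i j, ((s i j : ℤ) : ZMod N) = ((s j i : ℤ) : ZMod N) :=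
    fun i j => (hmod _ _).mp (by rw [hs i j, hs j i, ← hsym i j])
  -- construction of the reduced symmetrizer e
  set m : Fin θ → ℕ := fun i => (d i).toNat with hm
  have hmd : ∀ i, (m i : ℤ) = d i := fun i => Int.toNat_of_nonneg (hdpos i).le
  have hmpos : ∀ i, 0 < m i := fun i => Int.natCast_pos.mp (by rw [hmd]; exact hdpos i)
  set G := Finset.univ.gcd m with hG
  have hGdvd : ∀ i, G ∣ m i := fun i => Finset.gcd_dvd (Finset.mem_univ i)
  have hGpos : 0 < G := by
    rcases Nat.eq_zero_or_pos G with h | h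
    · exact absurd (Finset.gcd_eq_zero_iff.mp h i0 (Finset.mem_univ i0)) (hmpos i0).ne'
    · exact h
  set e : Fin θ → ℕ := fun i => m i / G with he
  have heG : ∀ i, G * e i = m i := fun i => Nat.mul_div_cancel' (hGdvd i)
  have hepos : ∀ i, 0 < e i :=
    fun i => Nat.div_pos (Nat.le_of_dvd (hmpos i) (hGdvd i)) hGpos
  have hesym : ∀ i j, (e i : ℤ) * a i j = (e j : ℤ) * a j i := by
    intro i j
    have h1 : (G : ℤ) * ((e i : ℤ) * a i j) = (G : ℤ) * ((e j : ℤ) * a j i) := by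
      have h2 : ((G * e i : ℕ) : ℤ) * a i j = ((G * e j : ℕ) : ℤ) * a j i := by
        rw [heG i, heG j, hmd i, hmd j]; exact hdsym i j
      push_cast at h2
      linarith [h2]
    exact mul_left_cancel₀ (by exact_mod_cast hGpos.ne' : (G : ℤ) ≠ 0) h1
  have hgcd_e : Finset.univ.gcd e = 1 :=
    Finset.gcd_div_eq_one (f := m) (Finset.mem_univ i0) (hmpos i0).ne'
  -- each e i is coprime to N
  have hecop : ∀ i, Nat.Coprime (e i) N := by
    intro i
    by_contra hcon
    obtain ⟨p, hp, hpdvd⟩ := Nat.exists_prime_and_dvd hcon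
    have hpe : p ∣ e i := hpdvd.trans (Nat.gcd_dvd_left _ _)
    have hpN : p ∣ N := hpdvd.trans (Nat.gcd_dvd_right _ _)
    have hprop : ∀ i' j', (p ∣ e i' → p ∣ e j') := by
      refine chain_rel' (a := a) (fun i' j' => p ∣ e i' → p ∣ e j') (fun _ h => h)
        (fun _ _ _ h1 h2 h => h2 (h1 h)) ?_ hconn
      intro x y hxy hpx
      rcases eq_or_ne x y with rfl | hne
      · exact hpx
      have hnzyx : a y x ≠ 0 := hanz x y hxy
      have h1 : (p : ℤ) ∣ (e y : ℤ) * a y x := by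
        rw [← hesym x y]
        exact Dvd.dvd.mul_right (Int.natCast_dvd_natCast.mpr hpx) _
      have hint : Prime (p : ℤ) := Nat.prime_iff_prime_int.mp hp
      rcases hint.2.2 _ _ h1 with h2 | h2
      · exact Int.natCast_dvd_natCast.mp h2
      · exfalso
        have h3 : p ∣ (a y x).natAbs := by
          have := Int.natAbs_dvd_natAbs.mpr h2
          simpa using this
        have h4 : p ∣ Nat.gcd (a y x).natAbs N := Nat.dvd_gcd h3 hpN
        have h5 : Nat.gcd (a y x).natAbs N = 1 := by
          have h6 := hcop y x hne.symm hnzyx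
          rwa [hNdiag y] at h6
        rw [h5] at h4
        exact hp.one_lt.ne' (Nat.dvd_one.mp h4)
    have hall : ∀ j', p ∣ e j' := fun j' => hprop i j' hpe
    have hdg : p ∣ Finset.univ.gcd e := Finset.dvd_gcd (fun j' _ => hall j')
    rw [hgcd_e] at hdg
    exact hp.one_lt.ne' (Nat.dvd_one.mp hdg)
  -- units in ZMod N
  have hunit2 : IsUnit (2 : ZMod N) := by
    have h := (ZMod.isUnit_iff_coprime 2 N).mpr (Nat.coprime_two_left.mpr hNodd)
    simpa using h
  have hunitE : ∀ i, IsUnit ((e i : ℕ) : ZMod N) :=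
    fun i => (ZMod.isUnit_iff_coprime (e i) N).mpr (hecop i)
  have hunitA : ∀ i j, a i j ≠ 0 → IsUnit ((a i j : ℤ) : ZMod N) := by
    intro i j hnz
    rcases eq_or_ne i j with rfl | hij
    · rw [haii i]
      simpa using hunit2
    · have hcp := hcop i j hij hnz
      rw [hNdiag i] at hcp
      have h1 : IsUnit (((a i j).natAbs : ℕ) : ZMod N) :=
        (ZMod.isUnit_iff_coprime _ N).mpr hcp
      have habs : ((a i j : ℤ) : ZMod N) = -(((a i j).natAbs : ℕ) : ZMod N) := by
        rw [← Int.cast_natCast, Int.ofNat_natAbs_of_nonpos (haij i j hij).2, Int.cast_neg,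
          neg_neg]
      rw [habs]
      exact h1.neg
  -- constancy of T i / E i
  have hTE : ∀ i j,
      ((s i i : ℤ) : ZMod N) * ((e j : ℕ) : ZMod N) = ((s j j : ℤ) : ZMod N) * ((e i : ℕ) : ZMod N) := by
    refine chain_rel' (a := a) _ (fun _ => rfl) ?_ ?_ hconn
    · intro i j l h1 h2
      apply (hunitE j).mul_right_cancel
      calc ((s i i : ℤ) : ZMod N) * ((e l : ℕ) : ZMod N) * ((e j : ℕ) : ZMod N)
          = ((s i i : ℤ) : ZMod N) * ((e j : ℕ) : ZMod N) * ((e l : ℕ) : ZMod N) := by ring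
        _ = ((s j j : ℤ) : ZMod N) * ((e i : ℕ) : ZMod N) * ((e l : ℕ) : ZMod N) := by rw [h1]
        _ = ((s j j : ℤ) : ZMod N) * ((e l : ℕ) : ZMod N) * ((e i : ℕ) : ZMod N) := by ring
        _ = ((s l l : ℤ) : ZMod N) * ((e j : ℕ) : ZMod N) * ((e i : ℕ) : ZMod N) := by rw [h2]
        _ = ((s l l : ℤ) : ZMod N) * ((e i : ℕ) : ZMod N) * ((e j : ℕ) : ZMod N) := by ring
    · intro i j hnz
      rcases eq_or_ne i j with rfl | hij
      · rfl
      have hnz' : a j i ≠ 0 := hanz i j hnz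
      have hTA : ((s i i : ℤ) : ZMod N) * ((a i j : ℤ) : ZMod N)
          = ((s j j : ℤ) : ZMod N) * ((a j i : ℤ) : ZMod N) := by
        rw [← hcong i j, ← hcong j i, hSsym i j]
      have hEA : ((e i : ℕ) : ZMod N) * ((a i j : ℤ) : ZMod N)
          = ((e j : ℕ) : ZMod N) * ((a j i : ℤ) : ZMod N) := by
        have h1 := congrArg (fun z : ℤ => (z : ZMod N)) (hesym i j)
        push_cast at h1 ⊢
        exact h1
      apply ((hunitA i j hnz).mul (hunitA j i hnz')).mul_right_cancel
      calc ((s i i : ℤ) : ZMod N) * ((e j : ℕ) : ZMod N)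
            * (((a i j : ℤ) : ZMod N) * ((a j i : ℤ) : ZMod N))
          = (((s i i : ℤ) : ZMod N) * ((a i j : ℤ) : ZMod N))
            * (((e j : ℕ) : ZMod N) * ((a j i : ℤ) : ZMod N)) := by ring
        _ = (((s j j : ℤ) : ZMod N) * ((a j i : ℤ) : ZMod N))
            * (((e i : ℕ) : ZMod N) * ((a i j : ℤ) : ZMod N)) := by rw [hTA, ← hEA]
        _ = ((s j j : ℤ) : ZMod N) * ((e i : ℕ) : ZMod N)
            * (((a i j : ℤ) : ZMod N) * ((a j i : ℤ) : ZMod N)) := by ring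
  -- the common value and the final q
  set u2 : (ZMod N)ˣ := hunit2.unit with hu2
  set uE : (ZMod N)ˣ := (hunitE i0).unit with huE
  have hu2v : (u2 : ZMod N) = 2 := hunit2.unit_spec
  have huEv : (uE : ZMod N) = ((e i0 : ℕ) : ZMod N) := (hunitE i0).unit_spec
  set c : ZMod N := ((s i0 i0 : ℤ) : ZMod N) * ((uE⁻¹ : (ZMod N)ˣ) : ZMod N)
    * ((u2⁻¹ : (ZMod N)ˣ) : ZMod N) with hc
  have h2inv : (2 : ZMod N) * ((u2⁻¹ : (ZMod N)ˣ) : ZMod N) = 1 := by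
    rw [← hu2v]; exact u2.mul_inv
  have hEinv : ((e i0 : ℕ) : ZMod N) * ((uE⁻¹ : (ZMod N)ˣ) : ZMod N) = 1 := by
    rw [← huEv]; exact uE.mul_inv
  have hce : ∀ i, (2 : ZMod N) * (c * ((e i : ℕ) : ZMod N)) = ((s i i : ℤ) : ZMod N) := by
    intro i
    calc (2 : ZMod N) * (c * ((e i : ℕ) : ZMod N))
        = (((s i0 i0 : ℤ) : ZMod N) * ((e i : ℕ) : ZMod N)) * ((uE⁻¹ : (ZMod N)ˣ) : ZMod N)
          * ((2 : ZMod N) * ((u2⁻¹ : (ZMod N)ˣ) : ZMod N)) := by rw [hc]; ring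
      _ = ((s i i : ℤ) : ZMod N) * (((e i0 : ℕ) : ZMod N) * ((uE⁻¹ : (ZMod N)ˣ) : ZMod N))
          * 1 := by rw [hTE i0 i, h2inv]; ring
      _ = ((s i i : ℤ) : ZMod N) := by rw [hEinv, mul_one, mul_one]
  refine ⟨fun i => (e i : ℤ), fun i => by simpa using (Int.natCast_pos.mpr (hepos i)), hesym, g ^ (c.val : ℤ), ?_⟩
  intro i j
  rw [← hs i j, ← zpow_mul]
  apply (hmod _ _).mpr
  apply hunit2.mul_left_cancel
  calc (2 : ZMod N) * ((s i j : ℤ) : ZMod N)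
      = ((s i i : ℤ) : ZMod N) * ((a i j : ℤ) : ZMod N) := hcong i j
    _ = (2 : ZMod N) * (c * ((e i : ℕ) : ZMod N)) * ((a i j : ℤ) : ZMod N) := by rw [hce i]
    _ = (2 : ZMod N) * ((((c.val : ℤ) * ((e i : ℤ) * a i j)) : ℤ) : ZMod N) := by
        push_cast
        rw [ZMod.natCast_val, ZMod.cast_id]
        ring
end

section
/- Let k be a field and let (b_ij), 1 ≤ i,j ≤ θ, be a symmetric braiding matrix of Cartan type all of whose entries are roots of unity of odd order, with associated Cartan integers (a_ij). If (b_ij) is connected and satisfies the relative primeness condition (for all i ≠ j, a_ij is 0 or relatively prime to the order of b_ii), then all the diagonal entries b_11, …, b_θθ have the same multiplicative order. -/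
private lemma orderOf_zpow_of_gcd_one {k : Type*} [Field k] (x : kˣ) (n : ℤ)
    (hn : n ≤ 0) (hg : Int.gcd n (orderOf x : ℤ) = 1) :
    orderOf (x ^ n) = orderOf x := by
  have h1 : x ^ n = (x ^ n.natAbs)⁻¹ := by
    have hn' : n = -((n.natAbs : ℤ)) := by omega
    rw [← zpow_natCast, ← zpow_neg, ← hn']
  rw [h1, orderOf_inv]
  have hc : (orderOf x).Coprime n.natAbs := by
    have := hg
    rw [Int.gcd] at this
    simpa [Nat.Coprime, Nat.gcd_comm] using this
  exact hc.orderOf_pow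

/-- For a symmetric, connected braiding matrix of Cartan type with entries
roots of unity of odd order satisfying the relative primeness condition, all diagonal
entries have the same multiplicative order. -/
theorem diagonal_entries_same_order_of_connected_cartan_braiding
    {k : Type*} [Field k] {θ : ℕ}
    (b : Fin θ → Fin θ → kˣ) (a : Fin θ → Fin θ → ℤ)
    -- entries are roots of unity of odd order
    (hodd : ∀ i j, Odd (orderOf (b i j)))
    -- Cartan type
    (hbii : ∀ i, b i i ≠ 1)
    (haii : ∀ i, a i i = 2)
    (haij : ∀ i j, i ≠ j → -(orderOf (b i i) : ℤ) < a i j ∧ a i j ≤ 0)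
    (hcartan : ∀ i j, b i j * b j i = b i i ^ (a i j))
    -- symmetric
    (hsym : ∀ i j, b i j = b j i)
    -- connected
    (hconn : ∀ i j, i ≠ j → ∃ P : ℕ, ∃ h : Fin (P + 1) → Fin θ,
      h 0 = i ∧ h (Fin.last P) = j ∧ ∀ l : Fin P, a (h l.castSucc) (h l.succ) ≠ 0)
    -- relative primeness condition
    (hprime : ∀ i j, i ≠ j → a i j = 0 ∨ Int.gcd (a i j) (orderOf (b i i) : ℤ) = 1) :
    ∀ i j, orderOf (b i i) = orderOf (b j j) := by
  -- key step for adjacent vertices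
  have key : ∀ i j, a i j ≠ 0 → orderOf (b i i) = orderOf (b j j) := by
    intro i j ha
    by_cases hij : i = j
    · subst hij; rfl
    · have hg : Int.gcd (a i j) (orderOf (b i i) : ℤ) = 1 :=
        (hprime i j hij).resolve_left ha
      have hle : a i j ≤ 0 := (haij i j hij).2
      have hord : orderOf (b i i ^ (a i j)) = orderOf (b i i) :=
        orderOf_zpow_of_gcd_one _ _ hle hg
      have hN1 : orderOf (b i i) ≠ 1 := by
        simpa [orderOf_eq_one_iff] using hbii i
      have hne1 : b i i ^ (a i j) ≠ 1 := by
        intro h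
        rw [h, orderOf_one] at hord
        exact hN1 hord.symm
      have heq : b i i ^ (a i j) = b j j ^ (a j i) := by
        rw [← hcartan i j, ← hcartan j i, mul_comm]
      have haji : a j i ≠ 0 := by
        intro h0
        rw [h0, zpow_zero] at heq
        exact hne1 (heq.trans rfl)
      have hgj : Int.gcd (a j i) (orderOf (b j j) : ℤ) = 1 :=
        (hprime j i (Ne.symm hij)).resolve_left haji
      have hlej : a j i ≤ 0 := (haij j i (Ne.symm hij)).2
      have hordj : orderOf (b j j ^ (a j i)) = orderOf (b j j) :=
        orderOf_zpow_of_gcd_one _ _ hlej hgj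
      rw [← hord, heq, hordj]
  intro i j
  by_cases hij : i = j
  · subst hij; rfl
  · obtain ⟨P, h, h0, hlast, hadj⟩ := hconn i j hij
    have step : ∀ l : Fin (P + 1), orderOf (b i i) = orderOf (b (h l) (h l)) := by
      intro l
      induction l using Fin.induction with
      | zero => rw [h0]
      | succ l ih => exact ih.trans (key _ _ (hadj l))
    have := step (Fin.last P)
    rwa [hlast] at this
end

section
/- Let k be a field, let b_11, b_22, b_12 ∈ kˣ be roots of unity of odd order with b_11 ≠ 1 and b_22 ≠ 1, let a_12, a_21 be negative integers with b_12² = b_11^{a_12} and b_12² = b_22^{a_21}, and let d_1, d_2 be relatively prime positive integers with d_1·a_12 = d_2·a_21. Then the following are equivalent: (i) there exist positive integers d'_1, d'_2 with d'_1·a_12 = d'_2·a_21 and q ∈ kˣ such that b_11 = q^{2d'_1}, b_22 = q^{2d'_2} and b_12 = q^{d'_1·a_12}; (ii) there exists u ∈ kˣ of odd finite order such that u^{2d_1} = b_11 and u^{2d_2} = b_22; (iii) there exists v ∈ kˣ such that v^{d_1} = b_11 and v^{d_2} = b_22. -/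
private lemma odd_of_dvd_odd' {a b : ℕ} (h : a ∣ b) (hb : Odd b) : Odd a := by
  rcases h with ⟨c, rfl⟩
  exact (Nat.odd_mul.mp hb).1

/-- Key lemma: replace a root by one of odd order, doubling the exponents. -/
private lemma exists_odd_root' {k : Type*} [Field k] {b11 b22 : kˣ}
    (hodd11 : Odd (orderOf b11)) (hodd22 : Odd (orderOf b22))
    {d1 d2 : ℕ} (hd1 : 0 < d1) {v : kˣ} (h1 : v ^ d1 = b11) (h2 : v ^ d2 = b22) :
    ∃ u : kˣ, Odd (orderOf u) ∧ u ^ (2 * d1) = b11 ∧ u ^ (2 * d2) = b22 := by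
  have hb11pos : 0 < orderOf b11 := hodd11.pos
  have hvfin : IsOfFinOrder v := by
    rw [isOfFinOrder_iff_pow_eq_one]
    exact ⟨d1 * orderOf b11, by positivity, by rw [pow_mul, h1, pow_orderOf_eq_one]⟩
  set n := orderOf v with hn
  have hnpos : 0 < n := hvfin.orderOf_pos
  set a := n.factorization 2 with ha
  set m := ordCompl[2] n with hm
  have hnm : 2 ^ a * m = n := Nat.ordProj_mul_ordCompl_eq_self n 2
  have hmodd : Odd m := by
    rw [← Nat.not_even_iff_odd, even_iff_two_dvd]
    exact Nat.not_dvd_ordCompl Nat.prime_two hnpos.ne'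
  have hmpos : 0 < m := Nat.ordCompl_pos 2 hnpos.ne'
  have hcopm : Nat.Coprime (2 ^ (a + 1)) m :=
    (Nat.coprime_two_left.mpr hmodd).pow_left _
  set t := (2 ^ (a + 1)) ^ (m.totient - 1) with ht
  have key : 2 ^ (a + 1) * t ≡ 1 [MOD m] := by
    have h1' : 2 ^ (a + 1) * t = (2 ^ (a + 1)) ^ m.totient := by
      rw [ht, ← pow_succ']
      congr 1
      have := Nat.totient_pos.mpr hmpos
      omega
    rw [h1']
    exact Nat.ModEq.pow_totient hcopm
  refine ⟨v ^ (2 ^ a * t), ?_, ?_, ?_⟩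
  · have hum : (v ^ (2 ^ a * t)) ^ m = 1 := by
      rw [← pow_mul]
      have : 2 ^ a * t * m = n * t := by rw [← hnm]; ring
      rw [this, pow_mul, pow_orderOf_eq_one, one_pow]
    exact odd_of_dvd_odd' (orderOf_dvd_of_pow_eq_one hum) hmodd
  · -- u ^ (2*d1) = b11
    have hdvd : orderOf b11 ∣ m := by
      have h1n : orderOf b11 ∣ n := orderOf_dvd_of_pow_eq_one (by
        rw [← h1, ← pow_mul, mul_comm, pow_mul, hn, pow_orderOf_eq_one, one_pow])
      have hc : Nat.Coprime (orderOf b11) (2 ^ a) :=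
        (Nat.coprime_two_right.mpr hodd11).pow_right _
      refine hc.dvd_of_dvd_mul_left ?_
      rwa [hnm]
    have he : 2 ^ a * t * (2 * d1) = d1 * (2 ^ (a + 1) * t) := by ring
    rw [← pow_mul, he, pow_mul, h1]
    have : 2 ^ (a + 1) * t ≡ 1 [MOD orderOf b11] := key.of_dvd hdvd
    calc b11 ^ (2 ^ (a + 1) * t) = b11 ^ 1 := pow_eq_pow_iff_modEq.mpr this
    _ = b11 := pow_one b11
  · have hdvd : orderOf b22 ∣ m := by
      have h1n : orderOf b22 ∣ n := orderOf_dvd_of_pow_eq_one (by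
        rw [← h2, ← pow_mul, mul_comm, pow_mul, hn, pow_orderOf_eq_one, one_pow])
      have hc : Nat.Coprime (orderOf b22) (2 ^ a) :=
        (Nat.coprime_two_right.mpr hodd22).pow_right _
      refine hc.dvd_of_dvd_mul_left ?_
      rwa [hnm]
    have he : 2 ^ a * t * (2 * d2) = d2 * (2 ^ (a + 1) * t) := by ring
    rw [← pow_mul, he, pow_mul, h2]
    have : 2 ^ (a + 1) * t ≡ 1 [MOD orderOf b22] := key.of_dvd hdvd
    calc b22 ^ (2 ^ (a + 1) * t) = b22 ^ 1 := pow_eq_pow_iff_modEq.mpr this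
    _ = b22 := pow_one b22

/-- Lemma 4.4: equivalent characterizations of FL-type in rank 2. -/
theorem rank_two_FL_type_tfae {k : Type*} [Field k]
    (b11 b22 b12 : kˣ)
    (hodd11 : Odd (orderOf b11)) (hodd22 : Odd (orderOf b22)) (hodd12 : Odd (orderOf b12))
    (hne1 : b11 ≠ 1) (hne2 : b22 ≠ 1)
    (a12 a21 : ℤ) (ha12 : a12 < 0) (ha21 : a21 < 0)
    (hc1 : b12 ^ 2 = b11 ^ a12) (hc2 : b12 ^ 2 = b22 ^ a21)
    (d1 d2 : ℕ) (hd1 : 0 < d1) (hd2 : 0 < d2) (hcop : Nat.Coprime d1 d2)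
    (hsymm : (d1 : ℤ) * a12 = (d2 : ℤ) * a21) :
    -- (i) ↔ (ii)
    ((∃ (d1' d2' : ℕ), 0 < d1' ∧ 0 < d2' ∧ (d1' : ℤ) * a12 = (d2' : ℤ) * a21 ∧
        ∃ q : kˣ, b11 = q ^ (2 * d1') ∧ b22 = q ^ (2 * d2') ∧ b12 = q ^ ((d1' : ℤ) * a12)) ↔
      (∃ u : kˣ, Odd (orderOf u) ∧ u ^ (2 * d1) = b11 ∧ u ^ (2 * d2) = b22)) ∧
    -- (ii) ↔ (iii)
    ((∃ u : kˣ, Odd (orderOf u) ∧ u ^ (2 * d1) = b11 ∧ u ^ (2 * d2) = b22) ↔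
      (∃ v : kˣ, v ^ d1 = b11 ∧ v ^ d2 = b22)) := by
  -- (ii) → (iii)
  have h23 : (∃ u : kˣ, Odd (orderOf u) ∧ u ^ (2 * d1) = b11 ∧ u ^ (2 * d2) = b22) →
      (∃ v : kˣ, v ^ d1 = b11 ∧ v ^ d2 = b22) := by
    rintro ⟨u, -, hu1, hu2⟩
    exact ⟨u ^ 2, by rw [← pow_mul]; exact hu1, by rw [← pow_mul]; exact hu2⟩
  -- (iii) → (ii)
  have h32 : (∃ v : kˣ, v ^ d1 = b11 ∧ v ^ d2 = b22) →
      (∃ u : kˣ, Odd (orderOf u) ∧ u ^ (2 * d1) = b11 ∧ u ^ (2 * d2) = b22) := by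
    rintro ⟨v, hv1, hv2⟩
    exact exists_odd_root' hodd11 hodd22 hd1 hv1 hv2
  constructor
  · constructor
    · -- (i) → (ii)
      rintro ⟨d1', d2', hd1', hd2', hsymm', q, hq1, hq2, -⟩
      apply h32
      -- show d1' = d1 * c, d2' = d2 * c
      have ha12' : a12 ≠ 0 := ha12.ne
      have hZ : (d1' : ℤ) * d2 = (d2' : ℤ) * d1 := by
        have : ((d1' : ℤ) * d2) * a12 = ((d2' : ℤ) * d1) * a12 := by
          calc ((d1' : ℤ) * d2) * a12 = ((d1' : ℤ) * a12) * d2 := by ring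
          _ = ((d2' : ℤ) * a21) * d2 := by rw [hsymm']
          _ = ((d2' : ℤ)) * ((d2 : ℤ) * a21) := by ring
          _ = ((d2' : ℤ)) * ((d1 : ℤ) * a12) := by rw [← hsymm]
          _ = ((d2' : ℤ) * d1) * a12 := by ring
        exact mul_right_cancel₀ ha12' this
      have hN : d1' * d2 = d2' * d1 := by exact_mod_cast hZ
      have hdvd : d1 ∣ d1' := by
        have : d1 ∣ d1' * d2 := hN ▸ Dvd.intro_left d2' rfl
        exact hcop.dvd_of_dvd_mul_right this
      obtain ⟨c, hc⟩ := hdvd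
      have hc2' : d2' = d2 * c := by
        have : d2' * d1 = (d2 * c) * d1 := by rw [← hN, hc]; ring
        exact Nat.eq_of_mul_eq_mul_right hd1 this
      refine ⟨q ^ (2 * c), ?_, ?_⟩
      · rw [← pow_mul, hq1]; congr 1; rw [hc]; ring
      · rw [← pow_mul, hq2]; congr 1; rw [hc2']; ring
    · -- (ii) → (i)
      rintro ⟨u, hu, hu1, hu2⟩
      refine ⟨d1, d2, hd1, hd2, hsymm, u, hu1.symm, hu2.symm, ?_⟩
      -- show b12 = u ^ ((d1 : ℤ) * a12)
      set z : ℤ := (d1 : ℤ) * a12 with hz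
      have key : b12 ^ 2 = (u ^ z) ^ 2 := by
        rw [hc1, ← hu1, ← zpow_natCast u (2 * d1), ← zpow_natCast (u ^ z) 2,
          ← zpow_mul, ← zpow_mul]
        congr 1
        push_cast
        ring
      set x : kˣ := b12 * (u ^ z)⁻¹ with hx
      have hx2 : x ^ 2 = 1 := by
        rw [hx, mul_pow, inv_pow, key, mul_inv_cancel]
      set M : ℕ := orderOf b12 * orderOf u with hM
      have hModd : Odd M := hodd12.mul hu
      have hxM : x ^ M = 1 := by
        rw [hx, mul_pow, inv_pow]
        have h1' : b12 ^ M = 1 := by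
          rw [hM, pow_mul, pow_orderOf_eq_one, one_pow]
        have h2' : (u ^ z) ^ M = 1 := by
          rw [← zpow_natCast (u ^ z) M, ← zpow_mul]
          rw [← orderOf_dvd_iff_zpow_eq_one]
          have : (orderOf u : ℤ) ∣ (M : ℤ) :=
            Int.natCast_dvd_natCast.mpr (Dvd.intro_left _ rfl)
          exact this.mul_left z
        rw [h1', h2', inv_one, one_mul]
      have hdvd2 : orderOf x ∣ 2 := orderOf_dvd_of_pow_eq_one hx2
      have hdvdM : orderOf x ∣ M := orderOf_dvd_of_pow_eq_one hxM
      have hx1 : x = 1 := by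
        have hcop2 : Nat.Coprime 2 M := Nat.coprime_two_left.mpr hModd
        have : orderOf x ∣ Nat.gcd 2 M := Nat.dvd_gcd hdvd2 hdvdM
        rw [hcop2] at this
        rw [← orderOf_eq_one_iff]
        exact Nat.eq_one_of_dvd_one this
      rw [hx, mul_inv_eq_one] at hx1
      exact hx1
  · exact ⟨h23, h32⟩
end

section
/- Let k be a field, let b_11, b_22 ∈ kˣ be roots of unity of odd orders N_1, N_2 respectively, with b_11 ≠ 1 and b_22 ≠ 1, and let d_1, d_2 be relatively prime positive integers. Let e_1, e_2 be positive integers such that r := e_1·d_1·N_1 = e_2·d_2·N_2, let s be the integer with r = d_1·d_2·s, let ξ ∈ kˣ be an element of order r, and let k_1, k_2 be integers with b_11 = ξ^{e_1·d_1·k_1} and b_22 = ξ^{e_2·d_2·k_2}. Then there exists v ∈ kˣ with v^{d_1} = b_11 and v^{d_2} = b_22 if and only if e_1·k_1 ≡ e_2·k_2 (mod s). -/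
/-- Lemma 4.5: criterion for condition (iii) of Lemma 4.4. -/
theorem exists_common_root_iff_congruence {k : Type*} [Field k]
    (b11 b22 : kˣ) (N1 N2 : ℕ)
    (hN1 : orderOf b11 = N1) (hN2 : orderOf b22 = N2)
    (hodd1 : Odd N1) (hodd2 : Odd N2)
    (hne1 : b11 ≠ 1) (hne2 : b22 ≠ 1)
    (d1 d2 : ℕ) (hd1 : 0 < d1) (hd2 : 0 < d2) (hcop : Nat.Coprime d1 d2)
    (e1 e2 : ℕ) (he1 : 0 < e1) (he2 : 0 < e2)
    (r : ℕ) (hr1 : e1 * d1 * N1 = r) (hr2 : e2 * d2 * N2 = r)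
    (s : ℕ) (hs : r = d1 * d2 * s)
    (ξ : kˣ) (hξ : orderOf ξ = r)
    (k1 k2 : ℤ)
    (hk1 : b11 = ξ ^ ((e1 * d1 : ℤ) * k1)) (hk2 : b22 = ξ ^ ((e2 * d2 : ℤ) * k2)) :
    (∃ v : kˣ, v ^ d1 = b11 ∧ v ^ d2 = b22) ↔
      Int.ModEq (s : ℤ) ((e1 : ℤ) * k1) ((e2 : ℤ) * k2) := by
  subst hs
  have key : ∀ a b : ℤ, ξ ^ a = ξ ^ b ↔ ((d1 * d2 * s : ℕ) : ℤ) ∣ (a - b) := by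
    intro a b
    rw [← hξ]
    constructor
    · intro h
      have h1 : ξ ^ (a - b) = 1 := by
        rw [zpow_sub, h, mul_inv_cancel]
      exact orderOf_dvd_iff_zpow_eq_one.mpr h1
    · rintro ⟨c, hc⟩
      have : a = b + (orderOf ξ : ℤ) * c := by linarith
      rw [this, zpow_add, zpow_mul, zpow_natCast, pow_orderOf_eq_one, one_zpow, mul_one]
  constructor
  · rintro ⟨v, hv1, hv2⟩
    have heq : ξ ^ (((e1 * d1 : ℤ) * k1) * d2) = ξ ^ (((e2 * d2 : ℤ) * k2) * d1) := by
      have hbb : b11 ^ (d2 : ℤ) = b22 ^ (d1 : ℤ) := by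
        rw [zpow_natCast, zpow_natCast, ← hv1, ← hv2, ← pow_mul, ← pow_mul, mul_comm]
      rw [hk1, hk2, ← zpow_mul, ← zpow_mul] at hbb
      exact hbb
    have hdvd := (key _ _).mp heq
    have hfac : ((e1 * d1 : ℤ) * k1) * d2 - ((e2 * d2 : ℤ) * k2) * d1 =
        ((d1 : ℤ) * d2) * ((e1 : ℤ) * k1 - (e2 : ℤ) * k2) := by push_cast; ring
    rw [hfac] at hdvd
    have hcast : ((d1 * d2 * s : ℕ) : ℤ) = ((d1 : ℤ) * d2) * s := by push_cast; ring
    rw [hcast] at hdvd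
    have hne : ((d1 : ℤ) * d2) ≠ 0 := by positivity
    have hsd : (s : ℤ) ∣ ((e1 : ℤ) * k1 - (e2 : ℤ) * k2) :=
      (mul_dvd_mul_iff_left hne).mp hdvd
    exact (Int.modEq_iff_dvd.mpr hsd).symm
  · intro h
    obtain ⟨t, ht⟩ : (s : ℤ) ∣ ((e1 : ℤ) * k1 - (e2 : ℤ) * k2) :=
      dvd_sub_comm.mp h.dvd
    set u := Int.gcdA d1 d2 with hu
    set w := Int.gcdB d1 d2 with hw
    have hbez : (d1 : ℤ) * u + (d2 : ℤ) * w = 1 := by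
      have hg := Int.gcd_eq_gcd_ab (d1 : ℤ) (d2 : ℤ)
      have : Int.gcd (d1 : ℤ) (d2 : ℤ) = 1 := by
        simpa [Int.gcd_natCast_natCast] using hcop
      rw [this] at hg
      simpa using hg.symm
    refine ⟨ξ ^ ((e1 : ℤ) * k1 - (s : ℤ) * t * d2 * w), ?_, ?_⟩
    · rw [← zpow_natCast (ξ ^ ((e1 : ℤ) * k1 - (s : ℤ) * t * d2 * w)), ← zpow_mul, hk1]
      refine (key _ _).mpr ⟨-(t * w), ?_⟩
      push_cast
      ring
    · rw [← zpow_natCast (ξ ^ ((e1 : ℤ) * k1 - (s : ℤ) * t * d2 * w)), ← zpow_mul, hk2]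
      refine (key _ _).mpr ⟨t * u, ?_⟩
      push_cast
      linear_combination (d2 : ℤ) * ht - (s : ℤ) * t * (d2 : ℤ) * hbez
end

section
/- Let k be an algebraically closed field of characteristic zero, let n be an odd positive integer, and let b_11, b_22, b_12 ∈ kˣ be roots of unity such that b_12² = b_11^{−1} and b_12² = b_22^{−n}. Then there exists q ∈ kˣ such that b_22 = q², b_11 = q^{2n} and b_12 = q^{−n}. -/
/-! Solving `q ^ 2 = b₂₂` determines `q` up to sign, and `b₁₂ ^ 2 = b₂₂ ^ (-n)` determines `b₁₂`
up to sign as `± q ^ (-n)`. Since `n` is odd, replacing `q` by `-q` flips the sign of `q ^ (-n)`,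
so one of the two square roots gives `b₁₂ = q ^ (-n)`, and then `b₁₁ = b₁₂ ^ (-2) = q ^ (2n)`. -/

theorem IsAlgClosed.exists_units_pow_eq {k : Type*} [Field k] [IsAlgClosed k] (u : kˣ) {m : ℕ}
    (hm : 0 < m) : ∃ q : kˣ, q ^ m = u := by
  obtain ⟨z, hz⟩ := IsAlgClosed.exists_pow_nat_eq (u : k) hm
  have hz0 : z ≠ 0 := by
    rintro rfl
    exact u.ne_zero (by rw [← hz, zero_pow hm.ne'])
  exact ⟨Units.mk0 z hz0, Units.ext (by simpa using hz)⟩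

theorem Units.exists_sq_eq_and_eq_zpow_neg_of_odd {R : Type*} [CommRing R] [NoZeroDivisors R]
    {n : ℕ} (hn : Odd n) {b c q : Rˣ} (hq : q ^ 2 = c) (hb : b ^ 2 = c ^ (-(n : ℤ))) :
    ∃ q' : Rˣ, q' ^ 2 = c ∧ b = q' ^ (-(n : ℤ)) := by
  have hsq : b ^ 2 = (q ^ (-(n : ℤ))) ^ 2 := by
    rw [hb, ← hq, ← zpow_natCast, ← zpow_natCast, ← zpow_mul, ← zpow_mul, mul_comm]
  rcases Units.eq_or_eq_neg_of_sq_eq_sq _ _ hsq with h | h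
  · exact ⟨q, hq, h⟩
  · refine ⟨-q, by rw [neg_sq, hq], ?_⟩
    rw [h, hn.natCast.neg.neg_zpow]

theorem rank_two_a12_eq_neg_one_is_FL_type_general {k : Type*} [Field k] [IsAlgClosed k]
    (n : ℕ) (hn : Odd n)
    (b11 b22 b12 : kˣ)
    (hc1 : b12 ^ 2 = b11 ^ (-1 : ℤ))
    (hc2 : b12 ^ 2 = b22 ^ (-(n : ℤ))) :
    ∃ q : kˣ, b22 = q ^ 2 ∧ b11 = q ^ (2 * n) ∧ b12 = q ^ (-(n : ℤ)) := by
  obtain ⟨q₀, hq₀⟩ := IsAlgClosed.exists_units_pow_eq b22 two_pos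
  obtain ⟨q, hq, hb12⟩ := Units.exists_sq_eq_and_eq_zpow_neg_of_odd hn hq₀ hc2
  refine ⟨q, hq.symm, ?_, hb12⟩
  have hb11 : b11 = (b12 ^ 2)⁻¹ := by rw [hc1, zpow_neg_one, inv_inv]
  rw [hb11, hb12, ← zpow_natCast, ← zpow_natCast, ← zpow_mul, ← zpow_neg]
  congr 1
  push_cast
  ring

/-- Lemma 4.8: a rank-2 braiding of Cartan type with a₁₂ = −1 and a₂₁ = −n,
n odd, is of FL-type. -/
theorem rank_two_a12_eq_neg_one_is_FL_type {k : Type*} [Field k] [IsAlgClosed k] [CharZero k]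
    (n : ℕ) (hn : Odd n) (hpos : 0 < n)
    (b11 b22 b12 : kˣ)
    (h1 : IsOfFinOrder b11) (h2 : IsOfFinOrder b22) (h3 : IsOfFinOrder b12)
    (hc1 : b12 ^ 2 = b11 ^ (-1 : ℤ))
    (hc2 : b12 ^ 2 = b22 ^ (-(n : ℤ))) :
    ∃ q : kˣ, b22 = q ^ 2 ∧ b11 = q ^ (2 * n) ∧ b12 = q ^ (-(n : ℤ)) :=
  rank_two_a12_eq_neg_one_is_FL_type_general n hn b11 b22 b12 hc1 hc2
end

section
/- Let p be an odd prime. There are no elements b, d, e, f ∈ ℤ/pℤ with e ≠ 0 satisfying b + d = −1, 3·b·d = 1, e + f = 0, and e·d + b·f = 0. -/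
/-- the rank-3 congruence system of type G₂ × A₁ has no solution. -/
theorem type_G2xA1_congruence (p : ℕ) (hp : p.Prime) (hodd : Odd p) :
    ¬ ∃ b d e f : ZMod p, e ≠ 0 ∧ b + d = -1 ∧ 3 * (b * d) = 1 ∧ e + f = 0 ∧
      e * d + b * f = 0 := by
  haveI := Fact.mk hp
  rintro ⟨b, d, e, f, he, h1, h2, h3, h4⟩
  have hdb : d = b := by
    have h : e * d = e * b := by linear_combination h4 - b * h3
    exact mul_left_cancel₀ he h
  subst hdb
  have h5 : (d + d) * (d + d) = 1 := by rw [h1]; ring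
  have : (1 : ZMod p) = 0 := by linear_combination 3 * h5 - 4 * h2
  exact one_ne_zero this
end

section
/- Let p be an odd prime. There are no elements b, d, f ∈ ℤ/pℤ satisfying b + d = −1, b·d = 1, f·(b − d) = −1, and f² = −1. -/
/-- the rank-3 congruence system of type A₃ has no solution. -/
theorem type_A3_congruence (p : ℕ) (hp : p.Prime) (hodd : Odd p) :
    ¬ ∃ b d f : ZMod p, b + d = -1 ∧ b * d = 1 ∧ f * (b - d) = -1 ∧ f ^ 2 = -1 := by
  rintro ⟨b, d, f, h1, h2, h3, h4⟩
  have h5 : (2 : ZMod p) = 0 := by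
    linear_combination (f * (b - d) - 1) * h3 - (b - d) ^ 2 * h4
      + (b + d - 1) * h1 - 4 * h2
  have hdvd : p ∣ 2 := by
    have := (ZMod.natCast_eq_zero_iff 2 p).mp (by exact_mod_cast h5)
    exact this
  have hp2 : p = 2 := (Nat.prime_dvd_prime_iff_eq hp Nat.prime_two).mp hdvd
  rw [hp2] at hodd
  exact (Nat.not_odd_iff_even.mpr (by norm_num)) hodd
end

section
/- Let p be an odd prime. There are no elements b, d, f ∈ ℤ/pℤ satisfying b + d = −1, b·d = 1, f·(b − d) = −1, and 2·f² = −1. -/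
/-- the rank-3 congruence system of type B₃ has no solution. -/
theorem type_B3_congruence (p : ℕ) (hp : p.Prime) (hodd : Odd p) :
    ¬ ∃ b d f : ZMod p, b + d = -1 ∧ b * d = 1 ∧ f * (b - d) = -1 ∧ 2 * f ^ 2 = -1 := by
  haveI := Fact.mk hp
  rintro ⟨b, d, f, h1, h2, h3, h4⟩
  have key : (1 : ZMod p) = 0 := by
    linear_combination (-2*f^2*(b+d-1)) * h1 + 8*f^2 * h2 + (2*f*(b-d)-2) * h3 + 3 * h4
  exact one_ne_zero key
end

section
/- Let p be an odd prime. There are no elements b, d, f ∈ ℤ/pℤ satisfying b + d = −1, b·d = 1, f·(b − d) = −2, and f² = −2. -/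
/-- the rank-3 congruence system of type C₃ has no solution. -/
theorem type_C3_congruence (p : ℕ) (hp : p.Prime) (hodd : Odd p) :
    ¬ ∃ b d f : ZMod p, b + d = -1 ∧ b * d = 1 ∧ f * (b - d) = -2 ∧ f ^ 2 = -2 := by
  haveI := Fact.mk hp
  rintro ⟨b, d, f, h1, h2, h3, h4⟩
  have hf : f ≠ 0 := by
    intro h
    rw [h] at h4
    have h2' : ((2 : ℕ) : ZMod p) = 0 := by push_cast; linear_combination h4
    have hdvd : p ∣ 2 := (ZMod.natCast_eq_zero_iff 2 p).mp h2'
    have hp2 : p = 2 := (Nat.prime_dvd_prime_iff_eq hp Nat.prime_two).mp hdvd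
    rw [hp2] at hodd
    exact (by norm_num : ¬ Odd 2) hodd
  have hbd : b - d = f := mul_left_cancel₀ hf (by rw [h3, ← h4]; ring)
  have h5 : (b - d) ^ 2 = -2 := by rw [hbd]; exact h4
  have h0 : (1 : ZMod p) = 0 := by
    linear_combination (b + d - 1) * h1 - 4 * h2 - h5
  exact one_ne_zero h0
end

section
/- Let k be a commutative ring, let q, β ∈ k, let A be an associative k-algebra and let x, y ∈ A. Define z_1 = x·y − β·y·x and inductively z_{j+1} = x·z_j − q^j·β·z_j·x for j ≥ 1. Then for every N ≥ 1: z_N = Σ_{i=0}^{N} (−1)^i · C(N,i)_q · q^{i(i−1)/2} · β^i · x^{N−i}·y·x^i, where C(N,i)_q denotes the Gaussian binomial coefficient evaluated at q. -/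
/-- The Gaussian (q-binomial) coefficient as a polynomial in ℤ[q], defined by
`C(n,0) = 1`, `C(0,i+1) = 0` and the q-Pascal identity
`C(n+1,h+1) = q^(h+1)·C(n,h+1) + C(n,h)`. -/
noncomputable def gaussBinom : ℕ → ℕ → Polynomial ℤ
  | 0, 0 => 1
  | 0, _ + 1 => 0
  | _ + 1, 0 => 1
  | n + 1, h + 1 => Polynomial.X ^ (h + 1) * gaussBinom n (h + 1) + gaussBinom n h

open Polynomial

lemma gaussBinom_zero_right : ∀ n, gaussBinom n 0 = 1
  | 0 => rfl
  | _ + 1 => rfl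

lemma gaussBinom_succ_succ (n h : ℕ) :
    gaussBinom (n + 1) (h + 1) = X ^ (h + 1) * gaussBinom n (h + 1) + gaussBinom n h := by
  rfl

lemma gaussBinom_eq_zero : ∀ n i, n < i → gaussBinom n i = 0
  | 0, 0, h => absurd h (by omega)
  | 0, _ + 1, _ => rfl
  | n + 1, 0, h => absurd h (by omega)
  | n + 1, i + 1, h => by
      rw [gaussBinom_succ_succ, gaussBinom_eq_zero n (i + 1) (by omega),
        gaussBinom_eq_zero n i (by omega)]
      ring

lemma gaussBinom_diag : ∀ n, gaussBinom n n = 1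
  | 0 => rfl
  | n + 1 => by
      rw [gaussBinom_succ_succ, gaussBinom_eq_zero n (n + 1) (by omega), gaussBinom_diag n]
      ring

lemma gaussBinom_pascal' : ∀ n h, h ≤ n →
    gaussBinom (n + 1) (h + 1) = gaussBinom n (h + 1) + X ^ (n - h) * gaussBinom n h
  | 0, 0, _ => by
      rw [gaussBinom_succ_succ]
      show X ^ 1 * 0 + 1 = 0 + X ^ 0 * 1
      ring
  | m + 1, h, hh => by
      rcases eq_or_lt_of_le hh with rfl | hlt
      · rw [gaussBinom_diag, gaussBinom_eq_zero (m + 1) (m + 2) (by omega), gaussBinom_diag]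
        simp
      · have hhm : h ≤ m := by omega
        have hkey : X ^ (m + 1) * gaussBinom m h + gaussBinom (m + 1) h
            = gaussBinom m h + X ^ (m + 1 - h) * gaussBinom (m + 1) h := by
          rcases h with _ | t
          · rw [gaussBinom_zero_right, gaussBinom_zero_right]
            simp [Nat.sub_zero]; ring
          · have htm : t ≤ m := by omega
            have h1 : m + 1 - (t + 1) = m - t := by omega
            rw [h1]
            nth_rewrite 1 [gaussBinom_pascal' m t htm]
            nth_rewrite 1 [gaussBinom_succ_succ m t]
            have h2 : X ^ (m - t) * X ^ (t + 1) = (X : Polynomial ℤ) ^ (m + 1) := by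
              rw [← pow_add]; congr 1; omega
            rw [mul_add, ← mul_assoc, h2]
            ring
        calc gaussBinom (m + 1 + 1) (h + 1)
            = X ^ (h + 1) * gaussBinom (m + 1) (h + 1) + gaussBinom (m + 1) h :=
              gaussBinom_succ_succ (m + 1) h
          _ = X ^ (h + 1) * (gaussBinom m (h + 1) + X ^ (m - h) * gaussBinom m h)
              + gaussBinom (m + 1) h := by rw [gaussBinom_pascal' m h hhm]
          _ = X ^ (h + 1) * gaussBinom m (h + 1)
              + (X ^ (h + 1 + (m - h)) * gaussBinom m h + gaussBinom (m + 1) h) := by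
              rw [pow_add]; ring
          _ = X ^ (h + 1) * gaussBinom m (h + 1)
              + (gaussBinom m h + X ^ (m + 1 - h) * gaussBinom (m + 1) h) := by
              rw [show h + 1 + (m - h) = m + 1 from by omega, hkey]
          _ = (X ^ (h + 1) * gaussBinom m (h + 1) + gaussBinom m h)
              + X ^ (m + 1 - h) * gaussBinom (m + 1) h := by ring
          _ = gaussBinom (m + 1) (h + 1) + X ^ (m + 1 - h) * gaussBinom (m + 1) h := by
              rw [← gaussBinom_succ_succ m h]

lemma tri (j : ℕ) : (j + 1) * j / 2 = j * (j - 1) / 2 + j := by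
  rcases j with _ | t
  · rfl
  · have h1 : (t + 1 + 1) * (t + 1) = (t + 1) * t + 2 * (t + 1) := by ring
    have h2 : (t + 1) * (t + 1 - 1) = (t + 1) * t := by simp
    omega

/-- formula (A.8): the closed formula for the iterated braided adjoint
`z_N = (ad_c x)^N (y)` with `q = χ(g)` and `β = η(g)`. -/
theorem iterated_braided_adjoint_formula
    {k A : Type*} [CommRing k] [Ring A] [Algebra k A]
    (q β : k) (x y : A) (z : ℕ → A)
    (hz1 : z 1 = x * y - β • (y * x))
    (hzrec : ∀ j : ℕ, 1 ≤ j → z (j + 1) = x * z j - (q ^ j * β) • (z j * x)) :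
    ∀ N : ℕ, 1 ≤ N →
      z N = ∑ i ∈ Finset.range (N + 1),
        ((-1 : k) ^ i * Polynomial.aeval q (gaussBinom N i) * q ^ (i * (i - 1) / 2) * β ^ i) •
          (x ^ (N - i) * y * x ^ i) := by
  intro N hN
  induction N, hN using Nat.le_induction with
  | base =>
    have h1 : gaussBinom 1 1 = 1 := by
      rw [gaussBinom_succ_succ]
      show X ^ 1 * 0 + 1 = 1
      ring
    rw [hz1, Finset.sum_range_succ, Finset.sum_range_succ, Finset.sum_range_zero,
      gaussBinom_zero_right, h1]
    norm_num
    rw [sub_eq_add_neg]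
  | succ N hN IH =>
    set c : ℕ → k := fun i =>
      (-1 : k) ^ i * Polynomial.aeval q (gaussBinom N i) * q ^ (i * (i - 1) / 2) * β ^ i with hc
    set e : ℕ → k := fun i => match i with
      | 0 => 0
      | j + 1 => q ^ N * β * c j with he
    have hcN1 : c (N + 1) = 0 := by
      simp [hc, gaussBinom_eq_zero N (N + 1) (by omega)]
    have hpoint : ∀ i ∈ Finset.range (N + 1 + 1),
        ((-1 : k) ^ i * Polynomial.aeval q (gaussBinom (N + 1) i) * q ^ (i * (i - 1) / 2) * β ^ i)
          • (x ^ (N + 1 - i) * y * x ^ i)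
        = c i • (x ^ (N + 1 - i) * y * x ^ i) - e i • (x ^ (N + 1 - i) * y * x ^ i) := by
      intro i hi
      rw [← sub_smul]
      congr 1
      rcases i with _ | j
      · simp [hc, he, gaussBinom_zero_right]
      · have hjN : j ≤ N := by
          have := Finset.mem_range.mp hi; omega
        have hP := gaussBinom_pascal' N j hjN
        have haev : Polynomial.aeval q (gaussBinom (N + 1) (j + 1))
            = Polynomial.aeval q (gaussBinom N (j + 1))
              + q ^ (N - j) * Polynomial.aeval q (gaussBinom N j) := by
          rw [hP]; simp [map_add, map_mul, map_pow]
        have htri : (j + 1) * ((j + 1) - 1) / 2 = j * (j - 1) / 2 + j := by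
          simpa using tri j
        have hq : q ^ N = q ^ (N - j) * q ^ j := by
          rw [← pow_add]; congr 1; omega
        simp only [hc, he, haev, htri, hq]
        ring
    have hmul : x * ∑ i ∈ Finset.range (N + 1), c i • (x ^ (N - i) * y * x ^ i)
        = ∑ i ∈ Finset.range (N + 1), c i • (x ^ (N + 1 - i) * y * x ^ i) := by
      rw [Finset.mul_sum]
      refine Finset.sum_congr rfl fun i hi => ?_
      have hiN : i ≤ N := by have := Finset.mem_range.mp hi; omega
      rw [mul_smul_comm]
      congr 1
      rw [← mul_assoc, ← mul_assoc, ← pow_succ', show N - i + 1 = N + 1 - i from by omega]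
    have hsx : (q ^ N * β) • ((∑ i ∈ Finset.range (N + 1),
          c i • (x ^ (N - i) * y * x ^ i)) * x)
        = ∑ i ∈ Finset.range (N + 1),
            e (i + 1) • (x ^ (N + 1 - (i + 1)) * y * x ^ (i + 1)) := by
      rw [Finset.sum_mul, Finset.smul_sum]
      refine Finset.sum_congr rfl fun i hi => ?_
      rw [show e (i + 1) = q ^ N * β * c i from rfl, smul_mul_assoc, smul_smul,
        Nat.succ_sub_succ, mul_assoc (x ^ (N - i) * y) (x ^ i) x, ← pow_succ, ← mul_assoc]
    have hA : ∑ i ∈ Finset.range (N + 1 + 1), c i • (x ^ (N + 1 - i) * y * x ^ i)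
        = ∑ i ∈ Finset.range (N + 1), c i • (x ^ (N + 1 - i) * y * x ^ i) := by
      rw [Finset.sum_range_succ, hcN1, zero_smul, add_zero]
    have hB : ∑ i ∈ Finset.range (N + 1 + 1), e i • (x ^ (N + 1 - i) * y * x ^ i)
        = ∑ i ∈ Finset.range (N + 1),
            e (i + 1) • (x ^ (N + 1 - (i + 1)) * y * x ^ (i + 1)) := by
      rw [Finset.sum_range_succ']
      rw [show e 0 = 0 from rfl, zero_smul, add_zero]
    have hmain : x * (∑ i ∈ Finset.range (N + 1), c i • (x ^ (N - i) * y * x ^ i))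
        - (q ^ N * β) • ((∑ i ∈ Finset.range (N + 1), c i • (x ^ (N - i) * y * x ^ i)) * x)
        = ∑ i ∈ Finset.range (N + 1 + 1),
            ((-1 : k) ^ i * Polynomial.aeval q (gaussBinom (N + 1) i)
              * q ^ (i * (i - 1) / 2) * β ^ i) • (x ^ (N + 1 - i) * y * x ^ i) := by
      rw [hmul, hsx, ← hB, ← hA, ← Finset.sum_sub_distrib]
      exact (Finset.sum_congr rfl hpoint).symm
    rw [hzrec N hN, IH]
    exact hmain
end

section
/- Let k be a commutative ring, let q, η be invertible elements of k, let r ≥ 1 be an integer, and for 0 ≤ i ≤ r set α_i = (−1)^i · C(r,i)_q · q^{(i²+i)/2} · (q^{−1})^{r·i} · (η^{−1})^i. Then for all integers ℓ ≥ 0 and h ≥ 0 with ℓ + h < r: Σ_{i=ℓ}^{r−h} α_i · C(i,ℓ)_q · C(r−i,h)_q · η^{i−ℓ} · q^{h(i−ℓ)} = 0. -/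
open Polynomial Finset

lemma gb_zero_right (n : ℕ) : gaussBinom n 0 = 1 := by cases n <;> rfl

lemma gb_pascal1 (n h : ℕ) : gaussBinom (n+1) (h+1)
    = Polynomial.X ^ (h+1) * gaussBinom n (h+1) + gaussBinom n h := rfl

lemma gb_eq_zero : ∀ n i : ℕ, n < i → gaussBinom n i = 0
  | 0, 0, h => by omega
  | 0, i+1, _ => rfl
  | n+1, 0, h => by omega
  | n+1, i+1, h => by
      rw [gb_pascal1, gb_eq_zero n (i+1) (by omega), gb_eq_zero n i (by omega)]
      ring

lemma gb_self : ∀ n : ℕ, gaussBinom n n = 1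
  | 0 => rfl
  | n+1 => by rw [gb_pascal1, gb_eq_zero n (n+1) (by omega), gb_self n]; ring

lemma gb_pascal2 : ∀ n h : ℕ, gaussBinom (n+1) (h+1)
    = gaussBinom n (h+1) + Polynomial.X ^ (n-h) * gaussBinom n h
  | 0, h => by
      cases h with
      | zero => simp [gb_pascal1, gaussBinom]
      | succ g => simp [gb_pascal1, gb_eq_zero 0 (g+2) (by omega), gb_eq_zero 0 (g+1) (by omega)]
  | n+1, 0 => by
      have h1 := gb_pascal1 n 0
      have h2 := gb_pascal2 n 0
      rw [gb_pascal1 (n+1) 0]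
      simp only [Nat.sub_zero, zero_add, pow_one, gb_zero_right] at *
      linear_combination Polynomial.X * h2 - h1
  | n+1, g+1 => by
      rcases le_or_gt (g+1) n with hle | hlt
      · obtain ⟨d, hd⟩ : ∃ d, n = g + 1 + d := ⟨n - (g+1), by omega⟩
        subst hd
        have h1 := gb_pascal1 (g+1+d+1) (g+1)
        have hA := gb_pascal2 (g+1+d) (g+1)
        have hB := gb_pascal2 (g+1+d) g
        have h2 := gb_pascal1 (g+1+d) (g+1)
        have h3 := gb_pascal1 (g+1+d) g
        have e1 : g + 1 + d + 1 - (g + 1) = d + 1 := by omega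
        have e2 : g + 1 + d - (g + 1) = d := by omega
        have e3 : g + 1 + d - g = d + 1 := by omega
        rw [e2] at hA
        rw [e3] at hB
        rw [e1]
        linear_combination h1 + Polynomial.X^(g+2) * hA + hB - h2 - Polynomial.X^(d+1) * h3
      · rcases Nat.lt_or_ge n g with h2 | h2
        · rw [gb_eq_zero (n+2) (g+2) (by omega), gb_eq_zero (n+1) (g+2) (by omega),
              gb_eq_zero (n+1) (g+1) (by omega)]
          ring
        · have hg : g = n := by omega
          subst hg
          have e1 : g + 1 - (g + 1) = 0 := by omega
          rw [gb_eq_zero (g+1) (g+2) (by omega), gb_self, gb_self, e1]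
          ring

lemma gb_tri : ∀ n i ℓ : ℕ, ℓ ≤ i →
    gaussBinom n i * gaussBinom i ℓ = gaussBinom n ℓ * gaussBinom (n-ℓ) (i-ℓ)
  | 0, i, ℓ, hle => by
      rcases Nat.eq_zero_or_pos i with hi | hi
      · subst hi
        have : ℓ = 0 := by omega
        subst this
        simp [gb_zero_right]
      · rw [gb_eq_zero 0 i (by omega), zero_mul]
        rcases Nat.eq_zero_or_pos ℓ with hl | hl
        · subst hl
          rw [Nat.sub_zero, Nat.sub_zero, gb_zero_right, gb_eq_zero 0 i (by omega)]
          ring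
        · rw [gb_eq_zero 0 ℓ (by omega), zero_mul]
  | n+1, i, 0, hle => by simp [gb_zero_right]
  | n+1, 0, l+1, hle => by omega
  | n+1, m+1, l+1, hle => by
      rcases Nat.lt_or_ge l m with hlm | hlm
      · rcases le_or_gt m n with hmn | hmn
        · obtain ⟨c, hc⟩ : ∃ c, m = l + 1 + c := ⟨m - (l+1), by omega⟩
          obtain ⟨d, hd⟩ : ∃ d, n = m + d := ⟨n - m, by omega⟩
          subst hd
          subst hc
          have h1 := gb_pascal1 (l+1+c+d) (l+1+c)
          have h2 := gb_pascal1 (l+1+c) l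
          have IH1 := gb_tri (l+1+c+d) (l+1+c+1) (l+1) (by omega)
          have IH2 := gb_tri (l+1+c+d) (l+1+c) (l+1) (by omega)
          have IH3 := gb_tri (l+1+c+d) (l+1+c) l (by omega)
          have h5 := gb_pascal1 (c+d) c
          have h4 := gb_pascal1 (l+1+c+d) l
          have E1 : l+1+c+d + 1 - (l + 1) = c+d+1 := by omega
          have E2 : l+1+c + 1 - (l + 1) = c+1 := by omega
          have E3 : l+1+c+d - (l + 1) = c+d := by omega
          have E4 : l+1+c - (l + 1) = c := by omega
          have E6 : l+1+c+d - l = c+d+1 := by omega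
          have E7 : l+1+c - l = c+1 := by omega
          rw [E3, E4] at IH2
          rw [E3, E2] at IH1
          rw [E6, E7] at IH3
          rw [E1, E2]
          linear_combination gaussBinom (l+1+c+1) (l+1) * h1 + gaussBinom (l+1+c+d) (l+1+c) * h2 +
            Polynomial.X^(l+1+c+1) * IH1 + Polynomial.X^(l+1) * IH2 + IH3 -
            gaussBinom (c+d+1) (c+1) * h4 - Polynomial.X^(l+1) * gaussBinom (l+1+c+d) (l+1) * h5
        · rw [gb_eq_zero (n+1) (m+1) (by omega), zero_mul]
          rcases le_or_gt l n with h' | h'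
          · rw [gb_eq_zero (n+1-(l+1)) (m+1-(l+1)) (by omega), mul_zero]
          · rw [gb_eq_zero (n+1) (l+1) (by omega), zero_mul]
      · have : l = m := by omega
        subst this
        simp [gb_self, gb_zero_right, Nat.sub_self]

/-- exponent `C(m-j, 2)` -/
def eee (m j : ℕ) : ℕ := (m - j) * (m - j - 1) / 2

lemma tri_half (a : ℕ) : a*(a-1)/2 + a = (a+1)*a/2 := by
  cases a with
  | zero => simp
  | succ u =>
    obtain ⟨t, ht⟩ := Nat.even_mul_succ_self u
    have ht' : (u+1)*u = 2*t := by rw [mul_comm]; omega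
    have h2 : (u+1+1)*(u+1) = (u+1)*u + 2*(u+1) := by ring
    simp only [Nat.add_sub_cancel]
    rw [h2, ht']
    omega

lemma eee_succ_succ (s j : ℕ) : eee (s+1) (j+1) = eee s j := by
  simp [eee, Nat.succ_sub_succ]

lemma eee_step (s j : ℕ) (h : j ≤ s) : eee s j + (s - j) = eee (s+1) j := by
  have h1 : s + 1 - j = (s - j) + 1 := by omega
  have h2 : (s - j) + 1 - 1 = s - j := by omega
  rw [eee, eee, h1, h2, tri_half]

lemma eee_drop (m t : ℕ) (h : t < m) : eee m (t+1) + (m - t - 1) = eee m t := by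
  have e1 : m - (t+1) = m - t - 1 := by omega
  have h1 : eee m (t+1) = (m-t-1) * (m-t-1-1) / 2 := by rw [eee, e1]
  have h2 : eee m t = ((m-t-1)+1) * (m-t-1) / 2 := by
    rw [eee]
    have e2 : m - t = (m - t - 1) + 1 := by omega
    rw [e2, Nat.add_sub_cancel]
  rw [h1, h2, tri_half]

lemma V0 (s : ℕ) :
    ∑ j ∈ range (s+2), (-1 : Polynomial ℤ)^j * Polynomial.X^(eee (s+1) j) * gaussBinom (s+1) j = 0 := by
  rw [Finset.sum_range_succ']
  have hterm : ∀ j ∈ range (s+1),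
      (-1 : Polynomial ℤ)^(j+1) * Polynomial.X^(eee (s+1) (j+1)) * gaussBinom (s+1) (j+1)
      = -((-1)^j * Polynomial.X^(eee s j) * gaussBinom s (j+1))
        - (-1)^j * Polynomial.X^(eee (s+1) j) * gaussBinom s j := by
    intro j hj
    have hjs : j ≤ s := by simpa using Nat.lt_succ_iff.mp (mem_range.mp hj)
    rw [eee_succ_succ, gb_pascal2 s j, ← eee_step s j hjs, pow_add, pow_succ]
    ring
  rw [Finset.sum_congr rfl hterm, Finset.sum_sub_distrib]
  have hA : ∑ j ∈ range (s+1), -((-1 : Polynomial ℤ)^j * Polynomial.X^(eee s j) * gaussBinom s (j+1))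
      = -∑ j ∈ range s, (-1 : Polynomial ℤ)^j * Polynomial.X^(eee s j) * gaussBinom s (j+1) := by
    rw [← Finset.sum_neg_distrib, Finset.sum_range_succ, gb_eq_zero s (s+1) (by omega)]
    simp
  have hB : ∑ j ∈ range (s+1), (-1 : Polynomial ℤ)^j * Polynomial.X^(eee (s+1) j) * gaussBinom s j
      = -(∑ j ∈ range s, (-1 : Polynomial ℤ)^j * Polynomial.X^(eee s j) * gaussBinom s (j+1))
        + Polynomial.X^(eee (s+1) 0) := by
    rw [Finset.sum_range_succ']
    have hterm2 : ∀ j ∈ range s,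
        (-1 : Polynomial ℤ)^(j+1) * Polynomial.X^(eee (s+1) (j+1)) * gaussBinom s (j+1)
        = -((-1)^j * Polynomial.X^(eee s j) * gaussBinom s (j+1)) := by
      intro j hj
      rw [eee_succ_succ, pow_succ]
      ring
    rw [Finset.sum_congr rfl hterm2, Finset.sum_neg_distrib, gb_zero_right]
    ring
  rw [hA, hB, gb_zero_right]
  ring

lemma Vstep (m h : ℕ) :
    ∑ j ∈ range (m+1), (-1 : Polynomial ℤ)^j * Polynomial.X^(eee m j) *
        (gaussBinom (m+h+1) j * gaussBinom (m+h+1-j) (h+1))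
    = ∑ j ∈ range (m+1), (-1 : Polynomial ℤ)^j * Polynomial.X^(eee m j) *
        (gaussBinom (m+h) j * gaussBinom (m+h-j) h) := by
  have key2 : ∀ j ∈ range (m+1),
      (-1 : Polynomial ℤ)^j * Polynomial.X^(eee m j) *
          (gaussBinom (m+h) j * gaussBinom (m+h+1-j) (h+1))
      = Polynomial.X^(h+1) * ((-1)^j * Polynomial.X^(eee m j) *
          (gaussBinom (m+h) j * gaussBinom (m+h-j) (h+1)))
        + (-1)^j * Polynomial.X^(eee m j) * (gaussBinom (m+h) j * gaussBinom (m+h-j) h) := by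
    intro j hj
    have hjm : j ≤ m := Nat.lt_succ_iff.mp (mem_range.mp hj)
    have e1 : m + h + 1 - j = (m + h - j) + 1 := by omega
    rw [e1, gb_pascal1 (m+h-j) h]
    ring
  -- expand the LHS
  rw [Finset.sum_range_succ']
  have hterm : ∀ t ∈ range m,
      (-1 : Polynomial ℤ)^(t+1) * Polynomial.X^(eee m (t+1)) *
          (gaussBinom (m+h+1) (t+1) * gaussBinom (m+h+1-(t+1)) (h+1))
      = (-1)^(t+1) * Polynomial.X^(eee m (t+1)) *
          (gaussBinom (m+h) (t+1) * gaussBinom (m+h+1-(t+1)) (h+1))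
        - Polynomial.X^(h+1) * ((-1)^t * Polynomial.X^(eee m t) *
            (gaussBinom (m+h) t * gaussBinom (m+h-t) (h+1))) := by
    intro t ht
    have htm : t < m := mem_range.mp ht
    have e1 : m + h + 1 - (t+1) = m + h - t := by omega
    have e2 : m + h - t = (m - t - 1) + (h + 1) := by omega
    rw [gb_pascal2 (m+h) t, e1]
    have e3 : eee m (t+1) + (m + h - t) = eee m t + (h+1) := by
      have := eee_drop m t htm
      omega
    have expand : (Polynomial.X : Polynomial ℤ) ^ (eee m (t+1)) * Polynomial.X ^ (m+h-t)
        = (Polynomial.X : Polynomial ℤ) ^ (eee m t) * Polynomial.X ^ (h+1) := by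
      rw [← pow_add, ← pow_add, e3]
    linear_combination ((-1 : Polynomial ℤ)^(t+1) * gaussBinom (m+h) t * gaussBinom (m+h-t) (h+1)) * expand
  rw [Finset.sum_congr rfl hterm, Finset.sum_sub_distrib]
  -- the subtracted sum equals X^(h+1) * P (extend to range (m+1), last term zero)
  have hcorr : ∑ t ∈ range m, Polynomial.X^(h+1) * ((-1 : Polynomial ℤ)^t * Polynomial.X^(eee m t) *
      (gaussBinom (m+h) t * gaussBinom (m+h-t) (h+1)))
      = ∑ t ∈ range (m+1), Polynomial.X^(h+1) * ((-1 : Polynomial ℤ)^t * Polynomial.X^(eee m t) *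
      (gaussBinom (m+h) t * gaussBinom (m+h-t) (h+1))) := by
    rw [Finset.sum_range_succ, Nat.add_sub_cancel_left, gb_eq_zero h (h+1) (by omega)]
    ring
  rw [hcorr]
  have hmain : ∑ t ∈ range m, (-1 : Polynomial ℤ)^(t+1) * Polynomial.X^(eee m (t+1)) *
        (gaussBinom (m+h) (t+1) * gaussBinom (m+h+1-(t+1)) (h+1))
      + (-1 : Polynomial ℤ)^0 * Polynomial.X^(eee m 0) *
        (gaussBinom (m+h) 0 * gaussBinom (m+h+1-0) (h+1))
      = ∑ j ∈ range (m+1), (-1 : Polynomial ℤ)^j * Polynomial.X^(eee m j) *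
        (gaussBinom (m+h) j * gaussBinom (m+h+1-j) (h+1)) := by
    rw [Finset.sum_range_succ']
  -- f 0 : gaussBinom (m+h+1) 0 = gaussBinom (m+h) 0
  have hzero : ((-1 : Polynomial ℤ))^0 * Polynomial.X^(eee m 0) *
        (gaussBinom (m+h+1) 0 * gaussBinom (m+h+1-0) (h+1))
      = ((-1 : Polynomial ℤ))^0 * Polynomial.X^(eee m 0) *
        (gaussBinom (m+h) 0 * gaussBinom (m+h+1-0) (h+1)) := by
    rw [gb_zero_right, gb_zero_right]
  rw [sub_add_eq_add_sub, hzero, hmain, Finset.sum_congr rfl key2, Finset.sum_add_distrib,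
      ← Finset.mul_sum]
  ring

lemma Vh : ∀ h m : ℕ, 1 ≤ m →
    ∑ j ∈ range (m+1), (-1 : Polynomial ℤ)^j * Polynomial.X^(eee m j) *
        (gaussBinom (m+h) j * gaussBinom (m+h-j) h) = 0
  | 0, m, hm => by
    obtain ⟨s, rfl⟩ : ∃ s, m = s + 1 := ⟨m - 1, by omega⟩
    have := V0 s
    rw [← this]
    apply Finset.sum_congr rfl
    intro j hj
    rw [Nat.add_zero, gb_zero_right]
    ring
  | h+1, m, hm => by
    have e1 : m + (h+1) = m + h + 1 := rfl
    rw [e1]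
    rw [Vstep m h]
    exact Vh h m hm

lemma Tcast (i : ℕ) : (((i^2+i)/2 : ℕ) : ℤ) * 2 = (i:ℤ)^2 + (i:ℤ) := by
  obtain ⟨t, ht⟩ := Nat.even_mul_succ_self i
  have h0' : i^2 + i = i*(i+1) := by ring
  have h0 : i^2 + i = 2*t := by omega
  have h1 : (i^2+i)/2 = t := by omega
  rw [h1]
  push_cast at h0 ⊢
  linarith

lemma Ecast (m j : ℕ) (hj : j ≤ m) :
    ((eee m j : ℕ) : ℤ) * 2 = ((m:ℤ)-j)^2 - ((m:ℤ)-j) := by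
  rcases Nat.eq_zero_or_pos (m-j) with h0 | h0
  · have hmj : (m:ℤ) - j = 0 := by omega
    have : eee m j = 0 := by simp [eee, h0]
    rw [this, hmj]
    norm_num
  · set u := m - j - 1 with hu
    have e : m - j = u + 1 := by omega
    have he : eee m j = (u+1)*u/2 := by
      rw [eee, e, Nat.add_sub_cancel]
    obtain ⟨t, ht⟩ := Nat.even_mul_succ_self u
    have h1 : (u+1)*u = 2*t := by rw [mul_comm]; omega
    have h2 : (u+1)*u/2 = t := by omega
    have hmj : (m:ℤ) - j = (u:ℤ) + 1 := by omega
    rw [he, h2, hmj]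
    have h1' : ((u:ℤ)+1)*(u:ℤ) = 2*(t:ℤ) := by exact_mod_cast h1
    linear_combination -h1' 

/-- equations (A.10a): the coefficients of `(ad_c x)^r y` satisfy
the first family of equations making it primitive. -/
theorem equations_A10a {k : Type*} [CommRing k] (q η : kˣ) (r : ℕ) (hr : 1 ≤ r) :
    ∀ ℓ h : ℕ, ℓ + h < r →
      ∑ i ∈ Finset.Icc ℓ (r - h),
        ((-1 : k) ^ i * Polynomial.aeval (q : k) (gaussBinom r i) *
            (q : k) ^ ((i ^ 2 + i) / 2) * ((q⁻¹ : kˣ) : k) ^ (r * i) *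
            ((η⁻¹ : kˣ) : k) ^ i) *
          Polynomial.aeval (q : k) (gaussBinom i ℓ) *
          Polynomial.aeval (q : k) (gaussBinom (r - i) h) *
          (η : k) ^ (i - ℓ) * (q : k) ^ (h * (i - ℓ)) = 0 := by
  intro ℓ h hlh
  set m := r - h - ℓ with hm
  have hm1 : 1 ≤ m := by omega
  have hmh : m + h = r - ℓ := by omega
  -- reindex the sum
  rw [← Finset.Ico_add_one_right_eq_Icc, Finset.sum_Ico_eq_sum_range]
  have hrange : r - h + 1 - ℓ = m + 1 := by omega
  rw [hrange]
  -- the constant factor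
  set C : k := (-1 : k)^ℓ * Polynomial.aeval (q : k) (gaussBinom r ℓ) *
      ((η⁻¹ : kˣ) : k)^ℓ *
      (((q^((ℓ^2+ℓ)/2) * (q⁻¹)^(r*ℓ + eee m 0)) : kˣ) : k) with hC
  have hterm : ∀ j ∈ range (m+1),
      ((-1 : k) ^ (ℓ+j) * Polynomial.aeval (q : k) (gaussBinom r (ℓ+j)) *
            (q : k) ^ (((ℓ+j) ^ 2 + (ℓ+j)) / 2) * ((q⁻¹ : kˣ) : k) ^ (r * (ℓ+j)) *
            ((η⁻¹ : kˣ) : k) ^ (ℓ+j)) *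
          Polynomial.aeval (q : k) (gaussBinom (ℓ+j) ℓ) *
          Polynomial.aeval (q : k) (gaussBinom (r - (ℓ+j)) h) *
          (η : k) ^ ((ℓ+j) - ℓ) * (q : k) ^ (h * ((ℓ+j) - ℓ))
      = C * Polynomial.aeval (q : k)
          ((-1 : Polynomial ℤ)^j * Polynomial.X^(eee m j) *
            (gaussBinom (m+h) j * gaussBinom (m+h-j) h)) := by
    intro j hj
    have hjm : j ≤ m := Nat.lt_succ_iff.mp (mem_range.mp hj)
    have e0 : ℓ + j - ℓ = j := by omega
    have e1 : r - (ℓ+j) = m + h - j := by omega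
    rw [e0, e1]
    -- trinomial identity evaluated
    have htri : Polynomial.aeval (q : k) (gaussBinom r (ℓ+j)) *
        Polynomial.aeval (q : k) (gaussBinom (ℓ+j) ℓ)
        = Polynomial.aeval (q : k) (gaussBinom r ℓ) *
          Polynomial.aeval (q : k) (gaussBinom (m+h) j) := by
      have := gb_tri r (ℓ+j) ℓ (by omega)
      rw [show r - ℓ = m + h by omega, e0] at this
      have := congrArg (Polynomial.aeval (q : k)) this
      simpa [map_mul] using this
    -- eta cancellation
    have hη : ((η⁻¹ : kˣ) : k)^(ℓ+j) * (η : k)^j = ((η⁻¹ : kˣ) : k)^ℓ := by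
      have : (η⁻¹)^(ℓ+j) * η^j = (η⁻¹)^ℓ := by
        rw [pow_add, mul_assoc, ← mul_pow, inv_mul_cancel, one_pow, mul_one]
      calc ((η⁻¹ : kˣ) : k)^(ℓ+j) * (η : k)^j
          = (((η⁻¹)^(ℓ+j) * η^j : kˣ) : k) := by
            rw [Units.val_mul, Units.val_pow_eq_pow_val, Units.val_pow_eq_pow_val]
        _ = ((η⁻¹ : kˣ) : k)^ℓ := by rw [this, Units.val_pow_eq_pow_val]
    -- q-power identity
    have zkey : ((((ℓ+j)^2 + (ℓ+j))/2 : ℕ) : ℤ) + (h:ℤ)*(j:ℤ) + ((r:ℤ)*(ℓ:ℤ) + ((eee m 0 : ℕ):ℤ))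
        = (((ℓ^2+ℓ)/2 : ℕ) : ℤ) + ((eee m j : ℕ):ℤ) + (r:ℤ)*((ℓ:ℤ)+(j:ℤ)) := by
      have A := Tcast (ℓ+j)
      have B := Tcast ℓ
      have C1 := Ecast m j hjm
      have C0 := Ecast m 0 (by omega)
      have hmz : (m:ℤ) = (r:ℤ) - (ℓ:ℤ) - (h:ℤ) := by omega
      push_cast at A B C1 C0 ⊢
      have goal2 : ((((ℓ:ℤ)+j)^2 + ((ℓ:ℤ)+j))/2 + (h:ℤ)*j + ((r:ℤ)*ℓ + ((eee m 0 : ℕ):ℤ))) * 2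
          = ((((ℓ:ℤ)^2+ℓ)/2) + ((eee m j : ℕ):ℤ) + (r:ℤ)*((ℓ:ℤ)+j)) * 2 := by
        linear_combination A - B - C1 + C0 + (2*(j:ℤ))*hmz
      linarith [goal2]
    have hqu : q^(((ℓ+j)^2 + (ℓ+j))/2) * (q⁻¹)^(r*(ℓ+j)) * q^(h*j)
        = (q^((ℓ^2+ℓ)/2) * (q⁻¹)^(r*ℓ + eee m 0)) * q^(eee m j) := by
      have conv1 : ∀ n : ℕ, (q⁻¹)^n = q^(-(n:ℤ)) := fun n => by
        rw [inv_pow, ← zpow_natCast, ← zpow_neg]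
      have conv2 : ∀ n : ℕ, q^n = q^((n:ℤ)) := fun n => (zpow_natCast q n).symm
      rw [conv1, conv1, conv2 (((ℓ+j)^2 + (ℓ+j))/2), conv2 (h*j), conv2 ((ℓ^2+ℓ)/2),
          conv2 (eee m j), ← zpow_add, ← zpow_add, ← zpow_add, ← zpow_add]
      congr 1
      push_cast at zkey ⊢
      linarith [zkey]
    have hq : (q : k)^(((ℓ+j)^2 + (ℓ+j))/2) * ((q⁻¹ : kˣ) : k)^(r*(ℓ+j)) * (q : k)^(h*j)
        = (((q^((ℓ^2+ℓ)/2) * (q⁻¹)^(r*ℓ + eee m 0)) : kˣ) : k) * (q : k)^(eee m j) := by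
      have := congrArg (Units.val) hqu
      simpa [Units.val_mul, Units.val_pow_eq_pow_val] using this
    calc ((-1 : k) ^ (ℓ+j) * Polynomial.aeval (q : k) (gaussBinom r (ℓ+j)) *
            (q : k) ^ (((ℓ+j) ^ 2 + (ℓ+j)) / 2) * ((q⁻¹ : kˣ) : k) ^ (r * (ℓ+j)) *
            ((η⁻¹ : kˣ) : k) ^ (ℓ+j)) *
          Polynomial.aeval (q : k) (gaussBinom (ℓ+j) ℓ) *
          Polynomial.aeval (q : k) (gaussBinom (m+h-j) h) *
          (η : k) ^ j * (q : k) ^ (h * j)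
        = ((-1 : k)^ℓ * (-1 : k)^j) *
            (Polynomial.aeval (q : k) (gaussBinom r (ℓ+j)) *
              Polynomial.aeval (q : k) (gaussBinom (ℓ+j) ℓ)) *
            Polynomial.aeval (q : k) (gaussBinom (m+h-j) h) *
            (((η⁻¹ : kˣ) : k)^(ℓ+j) * (η : k)^j) *
            ((q : k)^(((ℓ+j)^2 + (ℓ+j))/2) * ((q⁻¹ : kˣ) : k)^(r*(ℓ+j)) * (q : k)^(h*j)) := by
          rw [pow_add (-1 : k) ℓ j]; ring
      _ = C * Polynomial.aeval (q : k)
          ((-1 : Polynomial ℤ)^j * Polynomial.X^(eee m j) *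
            (gaussBinom (m+h) j * gaussBinom (m+h-j) h)) := by
          rw [htri, hη, hq, hC]
          simp only [map_mul, map_pow, map_neg, map_one, Polynomial.aeval_X]
          ring
  rw [Finset.sum_congr rfl hterm, ← Finset.mul_sum, ← map_sum, Vh h m hm1, map_zero, mul_zero]
end
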